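/- Fix α ∈ (0, 1] and set c_α = cos(απ/2), s_α = sin(απ/2). Define u_{α,x}(x) = 2(1 + c_α x^α)/(1 + 2c_α x^α + x^{2α}) and ψ_α(x) = (1 + 2c_α x^α + x^{2α})²·x^{1−3α}/(2 s_α α²) for x > 0. Then the product u_{α,xx}(x)·ψ_α(x) equals −(2x^{−α} + c_α(x^{−2α} + 1))/(s_α α), which is a monotonically increasing function of x on (0, ∞); consequently (d/dx)(u_{α,xx}·ψ_α) ≥ 0 on (0, ∞). -/

import Mathlib

/-!
In the variable `X = x ^ α` the profile is the rational function `2 (1 + c X) / D` with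
`D = 1 + 2 c X + X ^ 2`, whose `X`-derivative is `-2 (c + 2 X + c X ^ 2) / D ^ 2`. The chain-rule
factor `α X / x` together with the weight `ψ_α ∝ D ^ 2 x / X ^ 3` cancels `D ^ 2`, leaving
`-(c + 2 X + c X ^ 2) / (s α X ^ 2)`. Its derivative `2 α (x ^ (-α-1) + c x ^ (-2α-1)) / (s α)`
is nonnegative as soon as `c, s, α ≥ 0`.
-/

open Real

noncomputable def uαx (α x : ℝ) : ℝ :=
  2 * (1 + Real.cos (α * π / 2) * x ^ α) / (1 + 2 * Real.cos (α * π / 2) * x ^ α + x ^ (2 * α))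

noncomputable def ψα (α x : ℝ) : ℝ :=
  (1 + 2 * Real.cos (α * π / 2) * x ^ α + x ^ (2 * α)) ^ 2 * x ^ (1 - 3 * α) /
    (2 * Real.sin (α * π / 2) * α ^ 2)

open Set

noncomputable def uProfile (c X : ℝ) : ℝ := 2 * (1 + c * X) / (1 + 2 * c * X + X ^ 2)

lemma rpow_two_mul_eq_sq {x : ℝ} (hx : 0 ≤ x) (a : ℝ) : x ^ (2 * a) = (x ^ a) ^ 2 := by
  rw [mul_comm, rpow_mul hx, rpow_two]

lemma one_add_two_mul_add_sq_pos {c X : ℝ} (hc : -1 < c) (hX : 0 ≤ X) :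
    0 < 1 + 2 * c * X + X ^ 2 := by
  rcases hX.eq_or_lt with rfl | hX
  · norm_num
  · nlinarith [sq_nonneg (X - 1), mul_pos (neg_lt_iff_pos_add'.mp hc) hX]

lemma hasDerivAt_uProfile {c X : ℝ} (hD : 1 + 2 * c * X + X ^ 2 ≠ 0) :
    HasDerivAt (uProfile c) (-2 * (c + 2 * X + c * X ^ 2) / (1 + 2 * c * X + X ^ 2) ^ 2) X := by
  have hnum : HasDerivAt (fun X => 2 * (1 + c * X)) (2 * c) X := by
    simpa using (((hasDerivAt_id' X).const_mul c).const_add 1).const_mul 2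
  have hden : HasDerivAt (fun X => 1 + 2 * c * X + X ^ 2) (2 * c + 2 * X) X := by
    simpa using (((hasDerivAt_id' X).const_mul (2 * c)).const_add 1).fun_add (hasDerivAt_pow 2 X)
  exact (hnum.div hden hD).congr_deriv (by ring)

lemma uαx_eq_uProfile (α : ℝ) {x : ℝ} (hx : 0 ≤ x) :
    uαx α x = uProfile (cos (α * π / 2)) (x ^ α) := by
  rw [uαx, uProfile, rpow_two_mul_eq_sq hx]

lemma hasDerivAt_uαx {α x : ℝ} (hc : -1 < cos (α * π / 2)) (hx : 0 < x) :
    HasDerivAt (uαx α)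
      (-2 * (cos (α * π / 2) + 2 * x ^ α + cos (α * π / 2) * (x ^ α) ^ 2) /
        (1 + 2 * cos (α * π / 2) * x ^ α + (x ^ α) ^ 2) ^ 2 * (α * x ^ (α - 1))) x := by
  have hD := one_add_two_mul_add_sq_pos hc (rpow_nonneg hx.le α)
  refine ((hasDerivAt_uProfile hD.ne').comp x
    (hasDerivAt_rpow_const (Or.inl hx.ne'))).congr_of_eventuallyEq ?_
  filter_upwards [Ioi_mem_nhds hx] with y hy using uαx_eq_uProfile α (le_of_lt hy)

lemma deriv_uαx_mul_ψα {α x : ℝ} (hc : -1 < cos (α * π / 2)) (hx : 0 < x) :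
    deriv (uαx α) x * ψα α x =
      -(2 * x ^ (-α) + cos (α * π / 2) * (x ^ (-(2 * α)) + 1)) / (sin (α * π / 2) * α) := by
  have hX : 0 < x ^ α := rpow_pos_of_pos hx α
  have hD := one_add_two_mul_add_sq_pos hc hX.le
  have h3 : x ^ (3 * α) = (x ^ α) ^ 3 := by rw [mul_comm, rpow_mul hx.le]; norm_cast
  rw [(hasDerivAt_uαx hc hx).deriv, ψα, rpow_two_mul_eq_sq hx.le, rpow_sub hx, rpow_sub hx,
    rpow_one, rpow_neg hx.le, rpow_neg hx.le, rpow_two_mul_eq_sq hx.le, h3]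
  field_simp
  ring

noncomputable def dampingCoeff (c s α x : ℝ) : ℝ :=
  -(2 * x ^ (-α) + c * (x ^ (-(2 * α)) + 1)) / (s * α)

lemma hasDerivAt_dampingCoeff (c s α : ℝ) {x : ℝ} (hx : 0 < x) :
    HasDerivAt (dampingCoeff c s α)
      (2 * α * (x ^ (-α - 1) + c * x ^ (-(2 * α) - 1)) / (s * α)) x := by
  have h1 := hasDerivAt_rpow_const (p := -α) (Or.inl hx.ne')
  have h2 := hasDerivAt_rpow_const (p := -(2 * α)) (Or.inl hx.ne')
  exact ((((h1.const_mul 2).fun_add ((h2.add_const 1).const_mul c)).neg).div_const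
    (s * α)).congr_deriv (by ring)

lemma deriv_dampingCoeff_nonneg {c s α x : ℝ} (hc : 0 ≤ c) (hs : 0 ≤ s) (hα : 0 ≤ α)
    (hx : 0 < x) : 0 ≤ deriv (dampingCoeff c s α) x := by
  rw [(hasDerivAt_dampingCoeff c s α hx).deriv]
  have := rpow_pos_of_pos hx (-α - 1)
  have := rpow_pos_of_pos hx (-(2 * α) - 1)
  positivity

lemma monotoneOn_dampingCoeff {c s α : ℝ} (hc : 0 ≤ c) (hs : 0 ≤ s) (hα : 0 ≤ α) :
    MonotoneOn (dampingCoeff c s α) (Ioi 0) := by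
  have hdiff (x : ℝ) (hx : x ∈ Ioi 0) := (hasDerivAt_dampingCoeff c s α hx).differentiableAt
  refine monotoneOn_of_deriv_nonneg (convex_Ioi 0)
    (fun x hx => (hdiff x hx).continuousAt.continuousWithinAt) (fun x hx => ?_) (fun x hx => ?_)
    <;> rw [interior_Ioi] at hx
  · exact (hdiff x hx).differentiableWithinAt
  · exact deriv_dampingCoeff_nonneg hc hs hα hx

theorem damping_H1_alpha (α : ℝ) (hα : α ∈ Set.Ioc (0:ℝ) 1) :
    (∀ x : ℝ, 0 < x →
        deriv (uαx α) x * ψα α x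
          = -(2 * x ^ (-α) + Real.cos (α * π / 2) * (x ^ (-(2 * α)) + 1)) /
              (Real.sin (α * π / 2) * α)) ∧
    MonotoneOn (fun x => deriv (uαx α) x * ψα α x) (Set.Ioi 0) ∧
    ∀ x : ℝ, 0 < x → 0 ≤ deriv (fun y => deriv (uαx α) y * ψα α y) x := by
  obtain ⟨hα0, hα1⟩ := hα
  have hc : 0 ≤ cos (α * π / 2) :=
    cos_nonneg_of_mem_Icc ⟨by nlinarith [pi_pos], by nlinarith [pi_pos]⟩
  have hs : 0 ≤ sin (α * π / 2) :=
    sin_nonneg_of_nonneg_of_le_pi (by positivity) (by nlinarith [pi_pos])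
  have hclosed : EqOn (fun x => deriv (uαx α) x * ψα α x)
      (dampingCoeff (cos (α * π / 2)) (sin (α * π / 2)) α) (Ioi 0) :=
    fun x hx => deriv_uαx_mul_ψα (by linarith) hx
  refine ⟨hclosed, (monotoneOn_dampingCoeff hc hs hα0.le).congr hclosed.symm, fun x hx => ?_⟩
  rw [(hclosed.eventuallyEq_of_mem (Ioi_mem_nhds hx)).deriv_eq]
  exact deriv_dampingCoeff_nonneg hc hs hα0.le hx
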